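/- arXiv:2604.21680 — 3 statements merged into one kernel-verified Lean document; each statement's English description precedes it below -/
import Mathlib

section
/- Fix ε > 0 and p₀, p₁ ∈ (0,1), and let P₀ = Bernoulli(p₀) and P₁ = Bernoulli(p₁) on {0,1}. Let Q be the randomized-response kernel from {0,1} to {0,1} with Q({y}|x) = e^ε/(1+e^ε) if y = x and 1/(1+e^ε) if y ≠ x; its output marginal under Bernoulli(p) is Bernoulli((p·e^ε + 1 − p)/(1+e^ε)). Then for every measurable space Y and every ε-LDP Markov kernel κ from {0,1} to Y, KL(κ∘P₁ ‖ κ∘P₀) ≤ KL(Q∘P₁ ‖ Q∘P₀) = d((p₁e^ε + 1 − p₁)/(1+e^ε), (p₀e^ε + 1 − p₀)/(1+e^ε)). That is, the randomized-response binary mechanism maximizes the KL divergence between the induced output marginals over all ε-LDP mechanisms, for every privacy budget ε > 0. -/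
open MeasureTheory Real Set
open scoped ENNReal

noncomputable section

attribute [local instance] Classical.propDecidable

/-- Bernoulli measure on `Bool` with success probability `p`. -/
def bern (p : ℝ) : Measure Bool :=
  (ENNReal.ofReal (1 - p)) • Measure.dirac false + (ENNReal.ofReal p) • Measure.dirac true

/-- Kullback–Leibler divergence between two measures, with values in the extended reals. -/
def klDiv {Y : Type*} [MeasurableSpace Y] (μ ν : Measure Y) : EReal :=
  if μ ≪ ν ∧ Integrable (fun y => Real.log ((μ.rnDeriv ν y).toReal)) μ
  then ((∫ y, Real.log ((μ.rnDeriv ν y).toReal) ∂μ : ℝ) : EReal) else ⊤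

/-- KL divergence `d(a,b)` between `Bernoulli(a)` and `Bernoulli(b)`, with the conventions
`0·log 0 = 0` and `d(a,b) = ⊤` when `b ∈ {0,1}` and `a ≠ b`. -/
def bernKL (a b : ℝ) : EReal :=
  if (b = 0 ∨ b = 1) ∧ a ≠ b then ⊤
  else ((a * Real.log (a / b) + (1 - a) * Real.log ((1 - a) / (1 - b)) : ℝ) : EReal)

/-- `ε`-local differential privacy for a (Markov) kernel given as a map to measures. -/
def IsLDP {X Y : Type*} [MeasurableSpace X] [MeasurableSpace Y] (ε : ℝ) (κ : X → Measure Y) :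
    Prop :=
  ∀ x x' : X, ∀ S : Set Y, MeasurableSet S → κ x S ≤ ENNReal.ofReal (Real.exp ε) * κ x' S

/-- The randomized-response mechanism on `Bool` with privacy budget `ε`:
output `y = x` with probability `e^ε/(1+e^ε)` and `y ≠ x` with probability `1/(1+e^ε)`. -/
def rr (ε : ℝ) : Bool → Measure Bool :=
  fun x => bern (if x then Real.exp ε / (1 + Real.exp ε) else 1 / (1 + Real.exp ε))


/-- affine function `p*r + (1-p)` -/
def aaf (p r : ℝ) : ℝ := p * r + (1 - p)

/-- the function whose chord we take -/
def phi (p0 p1 r : ℝ) : ℝ := aaf p1 r * (Real.log (aaf p1 r) - Real.log (aaf p0 r))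

lemma aaf_pos {p : ℝ} (hp : p ∈ Set.Ioo (0:ℝ) 1) {r : ℝ} (hr : 0 < r) : 0 < aaf p r :=
  add_pos (mul_pos hp.1 hr) (by linarith [hp.2])

lemma hasDerivAt_aaf (p r : ℝ) : HasDerivAt (aaf p) p r := by
  have h := ((hasDerivAt_id r).const_mul p).add_const (1 - p)
  rw [mul_one] at h
  exact h

/-- first derivative of `phi` -/
def phiD (p0 p1 r : ℝ) : ℝ :=
  p1 * (Real.log (aaf p1 r) - Real.log (aaf p0 r)) + (p1 - aaf p1 r * p0 / aaf p0 r)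

lemma hasDerivAt_phi {p0 p1 : ℝ} (hp0 : p0 ∈ Set.Ioo (0:ℝ) 1) (hp1 : p1 ∈ Set.Ioo (0:ℝ) 1)
    {r : ℝ} (hr : 0 < r) : HasDerivAt (phi p0 p1) (phiD p0 p1 r) r := by
  have h1 := hasDerivAt_aaf p1 r
  have h0 := hasDerivAt_aaf p0 r
  have a1 := aaf_pos hp1 hr
  have a0 := aaf_pos hp0 hr
  have hlog1 : HasDerivAt (fun r => Real.log (aaf p1 r)) (p1 / aaf p1 r) r := h1.log a1.ne'
  have hlog0 : HasDerivAt (fun r => Real.log (aaf p0 r)) (p0 / aaf p0 r) r := h0.log a0.ne'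
  have := h1.mul (hlog1.sub hlog0)
  refine this.congr_deriv ?_
  simp only [Pi.sub_apply]
  unfold phiD
  field_simp

/-- second derivative of `phi` -/
def phiD2 (p0 p1 r : ℝ) : ℝ :=
  (p1 * aaf p0 r - p0 * aaf p1 r)^2 / (aaf p1 r * (aaf p0 r)^2)

lemma hasDerivAt_phiD {p0 p1 : ℝ} (hp0 : p0 ∈ Set.Ioo (0:ℝ) 1) (hp1 : p1 ∈ Set.Ioo (0:ℝ) 1)
    {r : ℝ} (hr : 0 < r) : HasDerivAt (phiD p0 p1) (phiD2 p0 p1 r) r := by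
  have h1 := hasDerivAt_aaf p1 r
  have h0 := hasDerivAt_aaf p0 r
  have a1 := aaf_pos hp1 hr
  have a0 := aaf_pos hp0 hr
  have hlog1 : HasDerivAt (fun r => Real.log (aaf p1 r)) (p1 / aaf p1 r) r := h1.log a1.ne'
  have hlog0 : HasDerivAt (fun r => Real.log (aaf p0 r)) (p0 / aaf p0 r) r := h0.log a0.ne'
  have hq : HasDerivAt (fun r => aaf p1 r * p0 / aaf p0 r)
      ((p1 * p0 * aaf p0 r - aaf p1 r * p0 * p0) / (aaf p0 r)^2) r := by
    exact (h1.mul_const p0).div h0 a0.ne'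
  have := (((hlog1.sub hlog0).const_mul p1).add ((hasDerivAt_const r p1).sub hq))
  refine this.congr_deriv ?_
  unfold phiD2
  field_simp
  ring

lemma convexOn_phi {p0 p1 : ℝ} (hp0 : p0 ∈ Set.Ioo (0:ℝ) 1) (hp1 : p1 ∈ Set.Ioo (0:ℝ) 1) :
    ConvexOn ℝ (Set.Ioi (0:ℝ)) (phi p0 p1) := by
  have hint : interior (Set.Ioi (0:ℝ)) = Set.Ioi 0 := interior_Ioi
  refine convexOn_of_hasDerivWithinAt2_nonneg (convex_Ioi 0)
    (fun x hx => (hasDerivAt_phi hp0 hp1 hx).continuousAt.continuousWithinAt)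
    (f' := phiD p0 p1) (f'' := phiD2 p0 p1) ?_ ?_ ?_
  · intro x hx
    rw [hint] at hx ⊢
    exact (hasDerivAt_phi hp0 hp1 hx).hasDerivWithinAt
  · intro x hx
    rw [hint] at hx ⊢
    exact (hasDerivAt_phiD hp0 hp1 hx).hasDerivWithinAt
  · intro x hx
    rw [hint] at hx
    have a1 := aaf_pos hp1 hx
    have a0 := aaf_pos hp0 hx
    unfold phiD2
    positivity

/-- slope of the chord of `phi` between `E⁻¹` and `E` -/
def chA (p0 p1 E : ℝ) : ℝ := (phi p0 p1 E - phi p0 p1 E⁻¹) / (E - E⁻¹)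

/-- intercept of the chord of `phi` between `E⁻¹` and `E` -/
def chB (p0 p1 E : ℝ) : ℝ := phi p0 p1 E⁻¹ - chA p0 p1 E * E⁻¹

lemma phi_chord {p0 p1 : ℝ} (hp0 : p0 ∈ Set.Ioo (0:ℝ) 1) (hp1 : p1 ∈ Set.Ioo (0:ℝ) 1)
    {E r : ℝ} (hE : 1 < E) (hr : r ∈ Set.Icc E⁻¹ E) :
    phi p0 p1 r ≤ chA p0 p1 E * r + chB p0 p1 E := by
  have hEpos : (0:ℝ) < E := by linarith
  have hLpos : (0:ℝ) < E⁻¹ := by positivity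
  have hLU : E⁻¹ < E := by
    calc E⁻¹ < 1 := by rw [inv_lt_one_iff₀]; right; exact hE
    _ < E := hE
  have hUL : E - E⁻¹ ≠ 0 := by linarith
  set L := E⁻¹
  have hrpos : 0 < r := lt_of_lt_of_le hLpos hr.1
  set θ := (E - r) / (E - L) with hθ
  set τ := (r - L) / (E - L) with hτ
  have hθ0 : 0 ≤ θ := by
    apply div_nonneg <;> [linarith [hr.2]; linarith]
  have hτ0 : 0 ≤ τ := by
    apply div_nonneg <;> [linarith [hr.1]; linarith]
  have hsum : θ + τ = 1 := by rw [hθ, hτ, ← add_div, div_eq_one_iff_eq hUL]; ring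
  have hcomb : θ • L + τ • E = r := by
    simp only [smul_eq_mul, hθ, hτ]
    field_simp
    ring
  have := (convexOn_phi hp0 hp1).2 (Set.mem_Ioi.2 hLpos) (Set.mem_Ioi.2 hEpos) hθ0 hτ0 hsum
  rw [hcomb] at this
  calc phi p0 p1 r ≤ θ • phi p0 p1 L + τ • phi p0 p1 E := this
  _ = chA p0 p1 E * r + chB p0 p1 E := by
      simp only [smul_eq_mul, hθ, hτ, chA, chB]
      have key : ∀ u v : ℝ, u / (E - E⁻¹) * v = u * v / (E - E⁻¹) :=
        fun u v => div_mul_eq_mul_div u _ v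
      rw [key, key, key, key, ← add_div, sub_div' hUL, ← add_div,
        div_eq_div_iff hUL hUL]
      ring

lemma key_pointwise {p0 p1 : ℝ} (hp0 : p0 ∈ Set.Ioo (0:ℝ) 1) (hp1 : p1 ∈ Set.Ioo (0:ℝ) 1)
    {E : ℝ} (hE : 1 < E) {f g t : ℝ} (hf : 0 ≤ f) (hg : 0 ≤ g)
    (hfE : f ≤ E * g) (hgE : g ≤ E * f)
    (ht : t * (p0 * f + (1 - p0) * g) = p1 * f + (1 - p1) * g) :
    (p1 * f + (1 - p1) * g) * Real.log t ≤ chA p0 p1 E * f + chB p0 p1 E * g := by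
  have hEpos : (0:ℝ) < E := by linarith
  rcases eq_or_lt_of_le hg with hg0 | hgpos
  · -- g = 0 hence f = 0
    have hgz : g = 0 := hg0.symm
    have hfz : f = 0 := le_antisymm (by rw [hgz] at hfE; simpa using hfE) hf
    simp [hgz, hfz]
  · have hfpos : 0 < f := by nlinarith
    set r := f / g with hr
    have hrg : f = r * g := by rw [hr, div_mul_cancel₀ _ hgpos.ne']
    have hrpos : 0 < r := div_pos hfpos hgpos
    have hrmem : r ∈ Set.Icc E⁻¹ E := by
      constructor
      · rw [hr, le_div_iff₀ hgpos, inv_mul_eq_div, div_le_iff₀ hEpos] at *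
        linarith
      · rw [hr, div_le_iff₀ hgpos]
        linarith
    have a1 := aaf_pos hp1 hrpos
    have a0 := aaf_pos hp0 hrpos
    have hk : p1 * f + (1 - p1) * g = g * aaf p1 r := by rw [hrg]; unfold aaf; ring
    have hh : p0 * f + (1 - p0) * g = g * aaf p0 r := by rw [hrg]; unfold aaf; ring
    have hhpos : 0 < g * aaf p0 r := mul_pos hgpos a0
    have htv : t = aaf p1 r / aaf p0 r := by
      rw [hk, hh] at ht
      rw [eq_div_iff a0.ne']
      have h' : g * (t * aaf p0 r) = g * aaf p1 r := by linear_combination ht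
      exact mul_left_cancel₀ hgpos.ne' h'
    have hlog : Real.log t = Real.log (aaf p1 r) - Real.log (aaf p0 r) := by
      rw [htv, Real.log_div a1.ne' a0.ne']
    calc (p1 * f + (1 - p1) * g) * Real.log t = g * phi p0 p1 r := by
          rw [hk, hlog]; unfold phi; ring
    _ ≤ g * (chA p0 p1 E * r + chB p0 p1 E) := by
          apply mul_le_mul_of_nonneg_left (phi_chord hp0 hp1 hE hrmem) hg
    _ = chA p0 p1 E * f + chB p0 p1 E * g := by rw [hrg]; ring

lemma chord_sum {p0 p1 : ℝ} (hp0 : p0 ∈ Set.Ioo (0:ℝ) 1) (hp1 : p1 ∈ Set.Ioo (0:ℝ) 1)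
    {E : ℝ} (hE : 1 < E) :
    ((p1 * E + (1 - p1)) / (1 + E)) * Real.log (((p1 * E + (1 - p1)) / (1 + E)) / ((p0 * E + (1 - p0)) / (1 + E)))
      + (1 - (p1 * E + (1 - p1)) / (1 + E)) *
        Real.log ((1 - (p1 * E + (1 - p1)) / (1 + E)) / (1 - (p0 * E + (1 - p0)) / (1 + E)))
      = chA p0 p1 E + chB p0 p1 E := by
  have hEpos : (0:ℝ) < E := by linarith
  have hE0 : E ≠ 0 := hEpos.ne'
  have h1E : (1:ℝ) + E ≠ 0 := by positivity
  have hUL : E - E⁻¹ ≠ 0 := by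
    have : E⁻¹ < 1 := by rw [inv_lt_one_iff₀]; right; exact hE
    have : E⁻¹ < E := by linarith
    linarith
  have aE1 : aaf p1 E = p1 * E + (1 - p1) := rfl
  have aE0 : aaf p0 E = p0 * E + (1 - p0) := rfl
  have haE1 : (0:ℝ) < aaf p1 E := aaf_pos hp1 hEpos
  have haE0 : (0:ℝ) < aaf p0 E := aaf_pos hp0 hEpos
  have hinv : (0:ℝ) < E⁻¹ := by positivity
  have haL1 : (0:ℝ) < aaf p1 E⁻¹ := aaf_pos hp1 hinv
  have haL0 : (0:ℝ) < aaf p0 E⁻¹ := aaf_pos hp0 hinv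
  -- rewrite the first ratio
  have hq1 : (p1 * E + (1 - p1)) / (1 + E) = aaf p1 E / (1 + E) := by rw [aE1]
  have hq0 : (p0 * E + (1 - p0)) / (1 + E) = aaf p0 E / (1 + E) := by rw [aE0]
  have hrat1 : ((p1 * E + (1 - p1)) / (1 + E)) / ((p0 * E + (1 - p0)) / (1 + E))
      = aaf p1 E / aaf p0 E := by
    rw [hq1, hq0, div_div_div_cancel_right₀ h1E]
  have hone1 : 1 - (p1 * E + (1 - p1)) / (1 + E) = E * aaf p1 E⁻¹ / (1 + E) := by
    unfold aaf
    field_simp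
    ring
  have hone0 : 1 - (p0 * E + (1 - p0)) / (1 + E) = E * aaf p0 E⁻¹ / (1 + E) := by
    unfold aaf
    field_simp
    ring
  have hrat2 : (1 - (p1 * E + (1 - p1)) / (1 + E)) / (1 - (p0 * E + (1 - p0)) / (1 + E))
      = aaf p1 E⁻¹ / aaf p0 E⁻¹ := by
    rw [hone1, hone0, div_div_div_cancel_right₀ h1E,
      mul_comm E, mul_comm E, mul_div_mul_right _ _ hE0]
  rw [hrat1, hrat2, hone1, hq1, Real.log_div haE1.ne' haE0.ne', Real.log_div haL1.ne' haL0.ne']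
  simp only [chB, chA, phi]
  have h2 : E^2 - 1 ≠ 0 := ne_of_gt (by nlinarith)
  have hEL : E - E⁻¹ = (E^2 - 1)/E := by field_simp
  rw [hEL]
  field_simp
  ring

-- PARTB
section MeasureAux

variable {Y : Type} [MeasurableSpace Y]

lemma isFiniteMeasure_ofReal_smul (c : ℝ) (μ : Measure Y) [IsFiniteMeasure μ] :
    IsFiniteMeasure (ENNReal.ofReal c • μ) :=
  ⟨by rw [Measure.smul_apply, smul_eq_mul]
      exact ENNReal.mul_lt_top ENNReal.ofReal_lt_top (measure_lt_top μ _)⟩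

instance isFiniteMeasure_bern (p : ℝ) : IsFiniteMeasure (bern p) := by
  unfold bern
  haveI := isFiniteMeasure_ofReal_smul (1 - p) (Measure.dirac false)
  haveI := isFiniteMeasure_ofReal_smul p (Measure.dirac true)
  infer_instance

lemma bern_bind (p : ℝ) (κ : Bool → Measure Y) :
    (bern p).bind κ = ENNReal.ofReal (1 - p) • κ false + ENNReal.ofReal p • κ true := by
  ext s hs
  rw [Measure.bind_apply hs (measurable_of_countable κ).aemeasurable]
  unfold bern
  rw [lintegral_add_measure, lintegral_smul_measure, lintegral_smul_measure,
    lintegral_dirac, lintegral_dirac]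
  simp [Measure.add_apply, Measure.smul_apply, smul_eq_mul]

lemma bern_apply (p : ℝ) (s : Set Bool) :
    bern p s = ENNReal.ofReal (1 - p) * s.indicator 1 false + ENNReal.ofReal p * s.indicator 1 true := by
  unfold bern
  rw [Measure.add_apply, Measure.smul_apply, Measure.smul_apply, Measure.dirac_apply,
    Measure.dirac_apply, smul_eq_mul, smul_eq_mul]

lemma isProbabilityMeasure_bind_bern {p : ℝ} (h0 : 0 ≤ p) (h1 : p ≤ 1)
    (κ : Bool → Measure Y) (hκ : ∀ x, IsProbabilityMeasure (κ x)) :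
    IsProbabilityMeasure ((bern p).bind κ) := by
  constructor
  rw [bern_bind, Measure.add_apply, Measure.smul_apply, Measure.smul_apply,
    (hκ false).measure_univ, (hκ true).measure_univ, smul_eq_mul, smul_eq_mul,
    mul_one, mul_one, ← ENNReal.ofReal_add (by linarith) h0]
  norm_num

lemma bern_withDensity (b : ℝ) (f : Bool → ℝ≥0∞) :
    (bern b).withDensity f
      = (ENNReal.ofReal (1 - b) * f false) • Measure.dirac false
        + (ENNReal.ofReal b * f true) • Measure.dirac true := by
  ext s hs
  rw [withDensity_apply _ hs]
  unfold bern
  rw [Measure.restrict_add, Measure.restrict_smul, Measure.restrict_smul,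
    lintegral_add_measure, lintegral_smul_measure, lintegral_smul_measure,
    setLIntegral_dirac f s, setLIntegral_dirac f s,
    Measure.add_apply, Measure.smul_apply, Measure.smul_apply,
    Measure.dirac_apply, Measure.dirac_apply]
  by_cases hf : false ∈ s <;> by_cases ht : true ∈ s <;>
    simp [hf, ht, mul_comm, mul_assoc, smul_eq_mul]

lemma integral_bern {p : ℝ} (h0 : 0 ≤ p) (h1 : p ≤ 1) (g : Bool → ℝ) :
    ∫ y, g y ∂(bern p) = (1 - p) * g false + p * g true := by
  haveI := isFiniteMeasure_ofReal_smul (1 - p) (Measure.dirac (false : Bool))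
  haveI := isFiniteMeasure_ofReal_smul p (Measure.dirac (true : Bool))
  unfold bern
  rw [integral_add_measure Integrable.of_finite Integrable.of_finite,
    integral_smul_measure, integral_smul_measure, integral_dirac, integral_dirac,
    ENNReal.toReal_ofReal (by linarith), ENNReal.toReal_ofReal h0, smul_eq_mul, smul_eq_mul]

lemma klDiv_bern {a b : ℝ} (ha : a ∈ Set.Ioo (0:ℝ) 1) (hb : b ∈ Set.Ioo (0:ℝ) 1) :
    klDiv (bern a) (bern b)
      = ((a * Real.log (a / b) + (1 - a) * Real.log ((1 - a) / (1 - b)) : ℝ) : EReal) := by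
  set f : Bool → ℝ≥0∞ := fun y => if y then ENNReal.ofReal (a / b) else ENNReal.ofReal ((1 - a) / (1 - b)) with hfdef
  have hwd : (bern b).withDensity f = bern a := by
    rw [bern_withDensity]
    unfold bern
    congr 1
    · congr 1
      simp only [hfdef, if_neg Bool.false_ne_true]
      rw [← ENNReal.ofReal_mul (by linarith [hb.2])]
      congr 1
      rw [mul_comm, div_mul_cancel₀ _ (by linarith [hb.2] : (1:ℝ) - b ≠ 0)]
    · congr 1
      simp only [hfdef, if_pos rfl]
      rw [← ENNReal.ofReal_mul hb.1.le]
      congr 1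
      rw [mul_comm, div_mul_cancel₀ _ hb.1.ne']
  have hac : bern a ≪ bern b := by
    rw [← hwd]; exact withDensity_absolutelyContinuous _ _
  have hrn : (bern a).rnDeriv (bern b) =ᵐ[bern b] f := by
    rw [← hwd]; exact Measure.rnDeriv_withDensity _ (measurable_of_countable f)
  have hrn' : (bern a).rnDeriv (bern b) =ᵐ[bern a] f := hrn.filter_mono hac.ae_le
  have hint : Integrable (fun y => Real.log (((bern a).rnDeriv (bern b) y).toReal)) (bern a) :=
    Integrable.of_finite
  rw [klDiv, if_pos ⟨hac, hint⟩]
  congr 1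
  rw [integral_congr_ae (hrn'.mono fun y hy => by rw [hy]),
    integral_bern ha.1.le ha.2.le]
  simp only [hfdef, if_pos rfl, if_neg Bool.false_ne_true]
  rw [ENNReal.toReal_ofReal (div_nonneg ha.1.le hb.1.le), ENNReal.toReal_ofReal
    (div_nonneg (by linarith [ha.2]) (by linarith [hb.2]))]
  ring

end MeasureAux

section PartC

variable {Y : Type} [MeasurableSpace Y]

lemma rr_bind {ε : ℝ} {p : ℝ} (h0 : 0 ≤ p) (h1 : p ≤ 1) :
    (bern p).bind (rr ε) = bern ((p * Real.exp ε + (1 - p)) / (1 + Real.exp ε)) := by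
  have hE : 0 < Real.exp ε := Real.exp_pos ε
  have h1E : (0:ℝ) < 1 + Real.exp ε := by linarith
  set E := Real.exp ε
  ext s hs
  rw [bern_bind, Measure.add_apply, Measure.smul_apply, Measure.smul_apply, smul_eq_mul,
    smul_eq_mul]
  have hrf : rr ε false = bern (1 / (1 + E)) := by simp [rr]; rfl
  have hrt : rr ε true = bern (E / (1 + E)) := by simp [rr]; rfl
  rw [hrf, hrt, bern_apply, bern_apply, bern_apply]
  have e1 : (0:ℝ) ≤ 1 - 1 / (1 + E) := by
    rw [sub_nonneg, div_le_one h1E]; linarith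
  have e2 : (0:ℝ) ≤ 1 / (1 + E) := by positivity
  have e3 : (0:ℝ) ≤ 1 - E / (1 + E) := by
    rw [sub_nonneg, div_le_one h1E]; linarith
  have e4 : (0:ℝ) ≤ E / (1 + E) := by positivity
  rw [mul_add, mul_add, ← mul_assoc, ← mul_assoc, ← mul_assoc, ← mul_assoc,
    ← ENNReal.ofReal_mul (by linarith), ← ENNReal.ofReal_mul h0,
    ← ENNReal.ofReal_mul (by linarith), ← ENNReal.ofReal_mul h0]
  have hre : ∀ u v w z : ℝ≥0∞, u + v + (w + z) = (u + w) + (v + z) := fun u v w z => by ring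
  rw [hre, ← add_mul, ← add_mul, ← ENNReal.ofReal_add (by nlinarith) (by nlinarith),
    ← ENNReal.ofReal_add (by nlinarith) (by nlinarith)]
  congr 2
  · field_simp
    ring
  · field_simp
    ring

lemma rnDeriv_le_of_le_smul {μ μ' ν : Measure Y} [IsFiniteMeasure μ'] [SigmaFinite μ]
    [SigmaFinite ν] (hμ'ν : μ' ≪ ν) (c : ℝ≥0∞)
    (h : ∀ s : Set Y, MeasurableSet s → μ s ≤ c * μ' s) :
    μ.rnDeriv ν ≤ᵐ[ν] fun y => c * μ'.rnDeriv ν y := by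
  refine ae_le_of_forall_setLIntegral_le_of_sigmaFinite (Measure.measurable_rnDeriv μ ν) ?_
  intro s hs _
  calc ∫⁻ x in s, μ.rnDeriv ν x ∂ν ≤ μ s := Measure.setLIntegral_rnDeriv_le s
  _ ≤ c * μ' s := h s hs
  _ = c * ∫⁻ x in s, μ'.rnDeriv ν x ∂ν := by rw [Measure.setLIntegral_rnDeriv hμ'ν s]
  _ = ∫⁻ x in s, c * μ'.rnDeriv ν x ∂ν :=
      (lintegral_const_mul c (Measure.measurable_rnDeriv μ' ν)).symm

end PartC

section MainIneq

variable {Y : Type} [MeasurableSpace Y]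

lemma main_ineq {ε p₀ p₁ : ℝ} (hε : 0 < ε)
    (hp₀ : p₀ ∈ Set.Ioo (0:ℝ) 1) (hp₁ : p₁ ∈ Set.Ioo (0:ℝ) 1) (κ : Bool → Measure Y)
    (hprob : ∀ x, IsProbabilityMeasure (κ x)) (hldp : IsLDP ε κ) :
    klDiv ((bern p₁).bind κ) ((bern p₀).bind κ)
      ≤ ((chA p₀ p₁ (Real.exp ε) + chB p₀ p₁ (Real.exp ε) : ℝ) : EReal) := by
  have hE : 1 < Real.exp ε := by
    rw [← Real.exp_zero]; exact Real.exp_lt_exp.2 hε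
  set E := Real.exp ε with hEdef
  have hEpos : (0:ℝ) < E := lt_trans one_pos hE
  haveI := hprob false
  haveI := hprob true
  set ν : Measure Y := κ false + κ true with hν
  have hκfν : κ false ≪ ν := Measure.absolutelyContinuous_of_le (Measure.le_add_right le_rfl)
  have hκtν : κ true ≪ ν := Measure.absolutelyContinuous_of_le (Measure.le_add_left le_rfl)
  set μ₀ := (bern p₀).bind κ with hμ₀
  set μ₁ := (bern p₁).bind κ with hμ₁
  haveI : IsProbabilityMeasure μ₀ := isProbabilityMeasure_bind_bern hp₀.1.le hp₀.2.le κ hprob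
  haveI : IsProbabilityMeasure μ₁ := isProbabilityMeasure_bind_bern hp₁.1.le hp₁.2.le κ hprob
  -- withDensity representation of the marginals
  have hwd : ∀ p : ℝ, (bern p).bind κ
      = ν.withDensity (fun y => ENNReal.ofReal (1 - p) * (κ false).rnDeriv ν y
          + ENNReal.ofReal p * (κ true).rnDeriv ν y) := by
    intro p
    have hsplit : (fun y => ENNReal.ofReal (1 - p) * (κ false).rnDeriv ν y
        + ENNReal.ofReal p * (κ true).rnDeriv ν y)
        = (fun y => ENNReal.ofReal (1 - p) * (κ false).rnDeriv ν y)
          + (fun y => ENNReal.ofReal p * (κ true).rnDeriv ν y) := rfl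
    rw [hsplit, withDensity_add_left ((Measure.measurable_rnDeriv _ _).const_mul _)]
    have h1 : ν.withDensity (fun y => ENNReal.ofReal (1 - p) * (κ false).rnDeriv ν y)
        = ENNReal.ofReal (1 - p) • ν.withDensity ((κ false).rnDeriv ν) :=
      withDensity_smul _ (Measure.measurable_rnDeriv _ _)
    have h2 : ν.withDensity (fun y => ENNReal.ofReal p * (κ true).rnDeriv ν y)
        = ENNReal.ofReal p • ν.withDensity ((κ true).rnDeriv ν) :=
      withDensity_smul _ (Measure.measurable_rnDeriv _ _)
    rw [h1, h2, Measure.withDensity_rnDeriv_eq _ _ hκfν, Measure.withDensity_rnDeriv_eq _ _ hκtν,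
      bern_bind]
  have hmeas : ∀ p : ℝ, Measurable (fun y => ENNReal.ofReal (1 - p) * (κ false).rnDeriv ν y
      + ENNReal.ofReal p * (κ true).rnDeriv ν y) :=
    fun p => ((Measure.measurable_rnDeriv _ _).const_mul _).add
      ((Measure.measurable_rnDeriv _ _).const_mul _)
  have hμ₁ν : μ₁ ≪ ν := by rw [hμ₁, hwd p₁]; exact withDensity_absolutelyContinuous _ _
  have hμ₀ν : μ₀ ≪ ν := by rw [hμ₀, hwd p₀]; exact withDensity_absolutelyContinuous _ _
  have hrn1 : μ₁.rnDeriv ν =ᵐ[ν] fun y => ENNReal.ofReal (1 - p₁) * (κ false).rnDeriv ν y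
      + ENNReal.ofReal p₁ * (κ true).rnDeriv ν y := by
    rw [hμ₁, hwd p₁]; exact Measure.rnDeriv_withDensity _ (hmeas p₁)
  have hrn0 : μ₀.rnDeriv ν =ᵐ[ν] fun y => ENNReal.ofReal (1 - p₀) * (κ false).rnDeriv ν y
      + ENNReal.ofReal p₀ * (κ true).rnDeriv ν y := by
    rw [hμ₀, hwd p₀]; exact Measure.rnDeriv_withDensity _ (hmeas p₀)
  -- mutual domination between the marginals
  have hdom : ∀ a b : ℝ, a ∈ Set.Ioo (0:ℝ) 1 → b ∈ Set.Ioo (0:ℝ) 1 →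
      ∀ s : Set Y, MeasurableSet s →
      ((bern a).bind κ) s
        ≤ (ENNReal.ofReal ((1 - a) / (1 - b)) + ENNReal.ofReal (a / b)) * ((bern b).bind κ) s := by
    intro a b ha hb s hs
    rw [bern_bind, bern_bind, Measure.add_apply, Measure.add_apply,
      Measure.smul_apply, Measure.smul_apply, Measure.smul_apply, Measure.smul_apply,
      smul_eq_mul, smul_eq_mul, smul_eq_mul, smul_eq_mul]
    have e1 : ENNReal.ofReal ((1 - a) / (1 - b)) * ENNReal.ofReal (1 - b) = ENNReal.ofReal (1 - a) := by
      rw [← ENNReal.ofReal_mul (div_nonneg (by linarith [ha.2]) (by linarith [hb.2]))]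
      congr 1
      rw [div_mul_cancel₀ _ (by linarith [hb.2] : (1:ℝ) - b ≠ 0)]
    have e2 : ENNReal.ofReal (a / b) * ENNReal.ofReal b = ENNReal.ofReal a := by
      rw [← ENNReal.ofReal_mul (div_nonneg ha.1.le hb.1.le)]
      congr 1
      rw [div_mul_cancel₀ _ hb.1.ne']
    calc ENNReal.ofReal (1 - a) * κ false s + ENNReal.ofReal a * κ true s
        ≤ ENNReal.ofReal (1 - a) * κ false s + ENNReal.ofReal a * κ true s
          + (ENNReal.ofReal ((1 - a) / (1 - b)) * (ENNReal.ofReal b * κ true s)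
            + ENNReal.ofReal (a / b) * (ENNReal.ofReal (1 - b) * κ false s)) := le_self_add
    _ = (ENNReal.ofReal ((1 - a) / (1 - b)) + ENNReal.ofReal (a / b))
          * (ENNReal.ofReal (1 - b) * κ false s + ENNReal.ofReal b * κ true s) := by
        rw [← e1, ← e2]
        ring
  set C : ℝ≥0∞ := ENNReal.ofReal ((1 - p₁) / (1 - p₀)) + ENNReal.ofReal (p₁ / p₀) with hC
  set C' : ℝ≥0∞ := ENNReal.ofReal ((1 - p₀) / (1 - p₁)) + ENNReal.ofReal (p₀ / p₁) with hC'
  have hCne : C ≠ ∞ := by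
    rw [hC]; exact ENNReal.add_ne_top.2 ⟨ENNReal.ofReal_ne_top, ENNReal.ofReal_ne_top⟩
  have hC'ne : C' ≠ ∞ := by
    rw [hC']; exact ENNReal.add_ne_top.2 ⟨ENNReal.ofReal_ne_top, ENNReal.ofReal_ne_top⟩
  have hC'pos : 0 < C' := by
    rw [hC']
    refine lt_of_lt_of_le ?_ le_self_add
    rw [ENNReal.ofReal_pos]
    exact div_pos (by linarith [hp₀.2]) (by linarith [hp₁.2])
  have hCpos : 0 < C := by
    rw [hC]
    refine lt_of_lt_of_le ?_ le_self_add
    rw [ENNReal.ofReal_pos]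
    exact div_pos (by linarith [hp₁.2]) (by linarith [hp₀.2])
  have hμ₁μ₀ : μ₁ ≪ μ₀ := by
    refine Measure.AbsolutelyContinuous.mk fun s hs h0 => ?_
    have := hdom p₁ p₀ hp₁ hp₀ s hs
    rw [← hμ₀, ← hμ₁, h0, mul_zero] at this
    exact le_antisymm this zero_le
  have hμ₀μ₁ : μ₀ ≪ μ₁ := by
    refine Measure.AbsolutelyContinuous.mk fun s hs h0 => ?_
    have := hdom p₀ p₁ hp₀ hp₁ s hs
    rw [← hμ₀, ← hμ₁, h0, mul_zero] at this
    exact le_antisymm this zero_le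
  -- bounds on rnDeriv μ₁ μ₀
  have hub : μ₁.rnDeriv μ₀ ≤ᵐ[μ₀] fun _ => C := by
    have h := rnDeriv_le_of_le_smul (Measure.AbsolutelyContinuous.refl μ₀) C
      (fun s hs => by rw [← hμ₀, ← hμ₁] at *; exact hdom p₁ p₀ hp₁ hp₀ s hs)
    filter_upwards [h, Measure.rnDeriv_self μ₀] with y h1 h2
    calc μ₁.rnDeriv μ₀ y ≤ C * μ₀.rnDeriv μ₀ y := h1
    _ = C := by rw [h2, mul_one]
  have hlb : (fun _ => C'⁻¹) ≤ᵐ[μ₀] μ₁.rnDeriv μ₀ := by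
    have h := rnDeriv_le_of_le_smul (Measure.AbsolutelyContinuous.refl μ₁) C'
      (fun s hs => by rw [← hμ₀, ← hμ₁] at *; exact hdom p₀ p₁ hp₀ hp₁ s hs)
    have h' : μ₀.rnDeriv μ₁ ≤ᵐ[μ₁] fun _ => C' := by
      filter_upwards [h, Measure.rnDeriv_self μ₁] with y h1 h2
      calc μ₀.rnDeriv μ₁ y ≤ C' * μ₁.rnDeriv μ₁ y := h1
      _ = C' := by rw [h2, mul_one]
    have h'' : μ₀.rnDeriv μ₁ ≤ᵐ[μ₀] fun _ => C' := h'.filter_mono hμ₀μ₁.ae_le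
    have hinv := Measure.inv_rnDeriv hμ₀μ₁
    filter_upwards [h'', hinv] with y h1 h2
    calc C'⁻¹ ≤ (μ₀.rnDeriv μ₁ y)⁻¹ := ENNReal.inv_le_inv.2 h1
    _ = μ₁.rnDeriv μ₀ y := h2
  -- real bounds
  set lo : ℝ := (C'⁻¹).toReal with hlo
  set hi : ℝ := C.toReal with hhi
  have hlopos : 0 < lo := ENNReal.toReal_pos (ENNReal.inv_ne_zero.2 hC'ne) (by
    rw [ne_eq, ENNReal.inv_eq_top]; exact hC'pos.ne')
  have hbdd : ∀ᵐ y ∂μ₀, lo ≤ ((μ₁.rnDeriv μ₀ y).toReal) ∧ ((μ₁.rnDeriv μ₀ y).toReal) ≤ hi := by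
    filter_upwards [hub, hlb] with y h1 h2
    have hyne : μ₁.rnDeriv μ₀ y ≠ ∞ := (lt_of_le_of_lt h1 hCne.lt_top).ne
    constructor
    · exact (ENNReal.toReal_le_toReal (by rw [ne_eq, ENNReal.inv_eq_top]; exact hC'pos.ne')
        hyne).2 h2
    · exact (ENNReal.toReal_le_toReal hyne hCne).2 h1
  -- integrability of the log-density
  set M : ℝ := max |Real.log lo| |Real.log hi| with hM
  have hbdd1 : ∀ᵐ y ∂μ₁, |Real.log ((μ₁.rnDeriv μ₀ y).toReal)| ≤ M := by
    filter_upwards [hbdd.filter_mono hμ₁μ₀.ae_le] with y hy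
    have h1 : Real.log ((μ₁.rnDeriv μ₀ y).toReal) ≤ Real.log hi :=
      Real.log_le_log (lt_of_lt_of_le hlopos hy.1) hy.2
    have h2 : Real.log lo ≤ Real.log ((μ₁.rnDeriv μ₀ y).toReal) :=
      Real.log_le_log hlopos hy.1
    rw [abs_le]
    constructor
    · calc -M ≤ -|Real.log lo| := neg_le_neg (le_max_left _ _)
      _ ≤ Real.log lo := neg_abs_le _
      _ ≤ _ := h2
    · calc Real.log ((μ₁.rnDeriv μ₀ y).toReal) ≤ Real.log hi := h1
      _ ≤ |Real.log hi| := le_abs_self _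
      _ ≤ M := le_max_right _ _
  have hmeaslog : AEStronglyMeasurable (fun y => Real.log ((μ₁.rnDeriv μ₀ y).toReal)) μ₁ :=
    (Real.measurable_log.comp (Measure.measurable_rnDeriv μ₁ μ₀).ennreal_toReal).aestronglyMeasurable
  have hint : Integrable (fun y => Real.log ((μ₁.rnDeriv μ₀ y).toReal)) μ₁ :=
    Integrable.mono' (integrable_const M) hmeaslog hbdd1
  rw [klDiv, if_pos ⟨hμ₁μ₀, hint⟩, EReal.coe_le_coe_iff]
  -- rewrite the integral over ν
  have hswap : ∫ y, Real.log ((μ₁.rnDeriv μ₀ y).toReal) ∂μ₁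
      = ∫ y, (μ₁.rnDeriv ν y).toReal • Real.log ((μ₁.rnDeriv μ₀ y).toReal) ∂ν :=
    (MeasureTheory.integral_rnDeriv_smul hμ₁ν).symm
  -- LDP density bounds
  have hFG : (κ true).rnDeriv ν ≤ᵐ[ν] fun y => ENNReal.ofReal E * (κ false).rnDeriv ν y :=
    rnDeriv_le_of_le_smul hκfν _ (fun s hs => hldp true false s hs)
  have hGF : (κ false).rnDeriv ν ≤ᵐ[ν] fun y => ENNReal.ofReal E * (κ true).rnDeriv ν y :=
    rnDeriv_le_of_le_smul hκtν _ (fun s hs => hldp false true s hs)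
  -- pointwise bound
  have hptwise : ∀ᵐ y ∂ν, (μ₁.rnDeriv ν y).toReal * Real.log ((μ₁.rnDeriv μ₀ y).toReal)
      ≤ chA p₀ p₁ E * ((κ true).rnDeriv ν y).toReal
        + chB p₀ p₁ E * ((κ false).rnDeriv ν y).toReal := by
    filter_upwards [hrn1, hrn0, Measure.rnDeriv_lt_top (κ true) ν,
      Measure.rnDeriv_lt_top (κ false) ν, Measure.rnDeriv_mul_rnDeriv hμ₁μ₀ (κ := ν),
      hFG, hGF] with y e1 e0 htfin hffin e2 h3 h4
    set f : ℝ := ((κ true).rnDeriv ν y).toReal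
    set g : ℝ := ((κ false).rnDeriv ν y).toReal
    have hky : (μ₁.rnDeriv ν y).toReal = p₁ * f + (1 - p₁) * g := by
      rw [e1, ENNReal.toReal_add (by finiteness) (by finiteness), ENNReal.toReal_mul,
        ENNReal.toReal_mul, ENNReal.toReal_ofReal (by linarith [hp₁.2]),
        ENNReal.toReal_ofReal hp₁.1.le]
      try ring
    have hhy : (μ₀.rnDeriv ν y).toReal = p₀ * f + (1 - p₀) * g := by
      rw [e0, ENNReal.toReal_add (by finiteness) (by finiteness), ENNReal.toReal_mul,
        ENNReal.toReal_mul, ENNReal.toReal_ofReal (by linarith [hp₀.2]),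
        ENNReal.toReal_ofReal hp₀.1.le]
      try ring
    have hteq : (μ₁.rnDeriv μ₀ y).toReal * (p₀ * f + (1 - p₀) * g) = p₁ * f + (1 - p₁) * g := by
      rw [← hhy, ← hky, ← ENNReal.toReal_mul]
      exact congrArg ENNReal.toReal e2
    have hfg : f ≤ E * g := by
      calc f ≤ (ENNReal.ofReal E * (κ false).rnDeriv ν y).toReal :=
            (ENNReal.toReal_le_toReal htfin.ne (by finiteness)).2 h3
      _ = E * g := by rw [ENNReal.toReal_mul, ENNReal.toReal_ofReal hEpos.le]
    have hgf : g ≤ E * f := by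
      calc g ≤ (ENNReal.ofReal E * (κ true).rnDeriv ν y).toReal :=
            (ENNReal.toReal_le_toReal hffin.ne (by finiteness)).2 h4
      _ = E * f := by rw [ENNReal.toReal_mul, ENNReal.toReal_ofReal hEpos.le]
    rw [hky]
    exact key_pointwise hp₀ hp₁ hE ENNReal.toReal_nonneg ENNReal.toReal_nonneg hfg hgf hteq
  -- integrability over ν
  have hι1 : Integrable (fun y => (μ₁.rnDeriv ν y).toReal • Real.log ((μ₁.rnDeriv μ₀ y).toReal)) ν :=
    (MeasureTheory.integrable_rnDeriv_smul_iff hμ₁ν).2 hint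
  have hιt : Integrable (fun y => ((κ true).rnDeriv ν y).toReal) ν :=
    Measure.integrable_toReal_rnDeriv
  have hιf : Integrable (fun y => ((κ false).rnDeriv ν y).toReal) ν :=
    Measure.integrable_toReal_rnDeriv
  calc ∫ y, Real.log ((μ₁.rnDeriv μ₀ y).toReal) ∂μ₁
      = ∫ y, (μ₁.rnDeriv ν y).toReal • Real.log ((μ₁.rnDeriv μ₀ y).toReal) ∂ν := hswap
  _ ≤ ∫ y, (chA p₀ p₁ E * ((κ true).rnDeriv ν y).toReal
        + chB p₀ p₁ E * ((κ false).rnDeriv ν y).toReal) ∂ν :=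
      integral_mono_ae hι1 ((hιt.const_mul _).add (hιf.const_mul _)) hptwise
  _ = chA p₀ p₁ E * ∫ y, ((κ true).rnDeriv ν y).toReal ∂ν
        + chB p₀ p₁ E * ∫ y, ((κ false).rnDeriv ν y).toReal ∂ν := by
      rw [integral_add (hιt.const_mul _) (hιf.const_mul _), integral_const_mul,
        integral_const_mul]
  _ = chA p₀ p₁ E + chB p₀ p₁ E := by
      rw [Measure.integral_toReal_rnDeriv hκtν, Measure.integral_toReal_rnDeriv hκfν]
      simp [measure_univ]


end MainIneq

/-- For Bernoulli inputs, the randomized-response binary mechanism maximizes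
the KL divergence between induced output marginals over all `ε`-LDP mechanisms, for every
privacy budget `ε > 0`; its value is the Bernoulli KL divergence of the output marginals. -/
theorem rr_maximizes_klDiv (ε p₀ p₁ : ℝ) (hε : 0 < ε)
    (hp₀ : p₀ ∈ Set.Ioo (0 : ℝ) 1) (hp₁ : p₁ ∈ Set.Ioo (0 : ℝ) 1) :
    (∀ (Y : Type) (_ : MeasurableSpace Y) (κ : Bool → Measure Y),
        (∀ x, IsProbabilityMeasure (κ x)) → IsLDP ε κ →
          klDiv ((bern p₁).bind κ) ((bern p₀).bind κ) ≤
            klDiv ((bern p₁).bind (rr ε)) ((bern p₀).bind (rr ε))) ∧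
      klDiv ((bern p₁).bind (rr ε)) ((bern p₀).bind (rr ε)) =
        bernKL ((p₁ * Real.exp ε + (1 - p₁)) / (1 + Real.exp ε))
          ((p₀ * Real.exp ε + (1 - p₀)) / (1 + Real.exp ε)) := by
  have hE : 1 < Real.exp ε := by
    rw [← Real.exp_zero]; exact Real.exp_lt_exp.2 hε
  have hEpos : (0:ℝ) < Real.exp ε := lt_trans one_pos hE
  have h1E : (0:ℝ) < 1 + Real.exp ε := by linarith
  have hqmem : ∀ p : ℝ, p ∈ Set.Ioo (0:ℝ) 1 →
      (p * Real.exp ε + (1 - p)) / (1 + Real.exp ε) ∈ Set.Ioo (0:ℝ) 1 := by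
    intro p hp
    constructor
    · apply div_pos _ h1E
      nlinarith [hp.1, hp.2]
    · rw [div_lt_one h1E]
      nlinarith [hp.1, hp.2]
  have hq₀mem := hqmem p₀ hp₀
  have hq₁mem := hqmem p₁ hp₁
  have hcond : ¬((((p₀ * Real.exp ε + (1 - p₀)) / (1 + Real.exp ε)) = 0
      ∨ ((p₀ * Real.exp ε + (1 - p₀)) / (1 + Real.exp ε)) = 1)
      ∧ ((p₁ * Real.exp ε + (1 - p₁)) / (1 + Real.exp ε))
        ≠ ((p₀ * Real.exp ε + (1 - p₀)) / (1 + Real.exp ε))) := by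
    rintro ⟨h | h, -⟩
    · exact absurd h hq₀mem.1.ne'
    · exact absurd h hq₀mem.2.ne
  have hRR : klDiv ((bern p₁).bind (rr ε)) ((bern p₀).bind (rr ε))
      = bernKL ((p₁ * Real.exp ε + (1 - p₁)) / (1 + Real.exp ε))
        ((p₀ * Real.exp ε + (1 - p₀)) / (1 + Real.exp ε)) := by
    rw [rr_bind hp₁.1.le hp₁.2.le, rr_bind hp₀.1.le hp₀.2.le, klDiv_bern hq₁mem hq₀mem,
      bernKL, if_neg hcond]
  have hval : bernKL ((p₁ * Real.exp ε + (1 - p₁)) / (1 + Real.exp ε))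
      ((p₀ * Real.exp ε + (1 - p₀)) / (1 + Real.exp ε))
      = ((chA p₀ p₁ (Real.exp ε) + chB p₀ p₁ (Real.exp ε) : ℝ) : EReal) := by
    rw [bernKL, if_neg hcond]
    exact_mod_cast congrArg (fun x : ℝ => (x : EReal)) (chord_sum hp₀ hp₁ hE)
  constructor
  · intro Y mY κ hκ hldp
    calc klDiv ((bern p₁).bind κ) ((bern p₀).bind κ)
        ≤ ((chA p₀ p₁ (Real.exp ε) + chB p₀ p₁ (Real.exp ε) : ℝ) : EReal) :=
          main_ineq hε hp₀ hp₁ κ hκ hldp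
    _ = bernKL ((p₁ * Real.exp ε + (1 - p₁)) / (1 + Real.exp ε))
          ((p₀ * Real.exp ε + (1 - p₀)) / (1 + Real.exp ε)) := hval.symm
    _ = klDiv ((bern p₁).bind (rr ε)) ((bern p₀).bind (rr ε)) := hRR.symm
  · exact hRR
end
end

section
/- Fix ε > 0 and q ∈ (1/2, 1), and set f* = (2q−1)·(e^ε − 1)/(e^ε + 1). For p ∈ (0,1) let M_p = Bernoulli((p·e^ε + 1 − p)/(1+e^ε)) denote the output marginal of the randomized-response kernel (which maps input x to x with probability e^ε/(1+e^ε) and to 1−x otherwise) under input Bernoulli(p). Then: (i) the likelihood ratio of the induced marginals satisfies dM_q/dM_{1/2}(y) = 1 + f*·(2y − 1) for y ∈ {0,1}; and (ii) for every measurable space Y, every ε-LDP Markov kernel κ from {0,1} to Y, and every measurable F : Y → [0,∞) with ∫ F d(κ∘Bernoulli(1/2)) ≤ 1, one has ∫ log F d(κ∘Bernoulli(q)) ≤ E_{M_q}[log(1 + f*·(2Y − 1))], with expectations interpreted in the extended reals. In other words, the privacy-adjusted Kelly bet e(y) = 1 + f*(2y−1) is the log-optimal ε-LDP e-variable for testing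 Bernoulli(1/2) against Bernoulli(q). -/
open MeasureTheory Real Set
open scoped ENNReal

noncomputable section

attribute [local instance] Classical.propDecidable

/-- Nonnegative part of an extended real, as an extended nonnegative real. -/
def eToENN (x : EReal) : ℝ≥0∞ := if x = ⊤ then ⊤ else ENNReal.ofReal x.toReal

/-- Integral of an extended-real-valued function, with values in the extended reals. -/
def eintE {Y : Type*} [MeasurableSpace Y] (μ : Measure Y) (f : Y → EReal) : EReal :=
  ((∫⁻ y, eToENN (f y) ∂μ : ℝ≥0∞) : EReal) - ((∫⁻ y, eToENN (-(f y)) ∂μ : ℝ≥0∞) : EReal)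

/-- Extended-real logarithm, with `log x = -∞` for `x ≤ 0`. -/
def elog (x : ℝ) : EReal := if x ≤ 0 then ⊥ else ((Real.log x : ℝ) : EReal)

lemma bool_measure_ext {μ ν : Measure Bool} (h0 : μ {false} = ν {false})
    (h1 : μ {true} = ν {true}) : μ = ν := by
  ext S _
  have hS : S = {false} ∪ {true} ∨ S = {false} ∨ S = {true} ∨ S = ∅ := by
    by_cases hf : false ∈ S <;> by_cases ht : true ∈ S
    · left; ext b; cases b <;> simp [hf, ht]
    · right; left; ext b; cases b <;> simp [hf, ht]
    · right; right; left; ext b; cases b <;> simp [hf, ht]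
    · right; right; right; ext b; cases b <;> simp [hf, ht]
  have hdisj : Disjoint ({false} : Set Bool) {true} := by simp
  rcases hS with rfl | rfl | rfl | rfl
  · rw [measure_union hdisj (measurableSet_singleton _),
      measure_union hdisj (measurableSet_singleton _), h0, h1]
  · exact h0
  · exact h1
  · simp

lemma bern_false (p : ℝ) : bern p {false} = ENNReal.ofReal (1 - p) := by
  simp [bern, Measure.dirac_apply]

lemma bern_true (p : ℝ) : bern p {true} = ENNReal.ofReal p := by
  simp [bern, Measure.dirac_apply]

lemma lintegral_bern (p : ℝ) (g : Bool → ℝ≥0∞) :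
    ∫⁻ x, g x ∂(bern p) =
      ENNReal.ofReal (1 - p) * g false + ENNReal.ofReal p * g true := by
  simp [bern, lintegral_add_measure, lintegral_smul_measure, lintegral_dirac]

lemma bern_bind_apply {Y : Type*} [MeasurableSpace Y] (p : ℝ) (κ : Bool → Measure Y)
    {S : Set Y} (hS : MeasurableSet S) :
    (bern p).bind κ S = ENNReal.ofReal (1 - p) * κ false S + ENNReal.ofReal p * κ true S := by
  rw [Measure.bind_apply hS Measurable.of_discrete.aemeasurable, lintegral_bern]

lemma bern_prob {p : ℝ} (h0 : 0 ≤ p) (h1 : p ≤ 1) : IsProbabilityMeasure (bern p) := by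
  constructor
  have : (Set.univ : Set Bool) = {false} ∪ {true} := by ext b; cases b <;> simp
  rw [this, measure_union (by simp) (measurableSet_singleton _), bern_false, bern_true,
    ← ENNReal.ofReal_add (by linarith) h0]
  norm_num

lemma bern_bind_prob {Y : Type*} [MeasurableSpace Y] {p : ℝ} (h0 : 0 ≤ p) (h1 : p ≤ 1)
    (κ : Bool → Measure Y) (hκ : ∀ x, IsProbabilityMeasure (κ x)) :
    IsProbabilityMeasure ((bern p).bind κ) := by
  constructor
  rw [bern_bind_apply p κ MeasurableSet.univ, (hκ false).measure_univ, (hκ true).measure_univ,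
    mul_one, mul_one, ← ENNReal.ofReal_add (by linarith) h0]
  norm_num

lemma eToENN_mono {x y : EReal} (h : x ≤ y) : eToENN x ≤ eToENN y := by
  rcases eq_or_ne y ⊤ with rfl | hy
  · simp [eToENN]
  rcases eq_or_ne x ⊤ with rfl | hx
  · exact absurd (top_le_iff.1 h) hy
  simp only [eToENN, if_neg hx, if_neg hy]
  rcases eq_or_ne x ⊥ with rfl | hx'
  · simp
  · exact ENNReal.ofReal_le_ofReal (EReal.toReal_le_toReal h hx' hy)

lemma eintE_mono_ae {Y : Type*} [MeasurableSpace Y] {μ : Measure Y} {f g : Y → EReal}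
    (h : ∀ᵐ y ∂μ, f y ≤ g y) : eintE μ f ≤ eintE μ g := by
  refine EReal.sub_le_sub ?_ ?_
  · exact EReal.coe_ennreal_le_coe_ennreal_iff.2
      (lintegral_mono_ae (h.mono fun y hy => eToENN_mono hy))
  · exact EReal.coe_ennreal_le_coe_ennreal_iff.2
      (lintegral_mono_ae (h.mono fun y hy => eToENN_mono (EReal.neg_le_neg_iff.2 hy)))

lemma coe_ennreal_eq_coe_toReal {A : ℝ≥0∞} (hA : A ≠ ⊤) :
    (A : EReal) = ((A.toReal : ℝ) : EReal) := by
  conv_lhs => rw [← ENNReal.ofReal_toReal hA]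
  rw [EReal.coe_ennreal_ofReal, max_eq_left ENNReal.toReal_nonneg]

lemma eintE_coe_eq_integral {Y : Type*} [MeasurableSpace Y] {μ : Measure Y} {h : Y → ℝ}
    (hint : Integrable h μ) :
    eintE μ (fun y => ((h y : ℝ) : EReal)) = ((∫ y, h y ∂μ : ℝ) : EReal) := by
  have h1 : ∀ y, eToENN ((h y : ℝ) : EReal) = ENNReal.ofReal (h y) := fun y => by
    simp [eToENN, EReal.coe_ne_top]
  have h2 : ∀ y, eToENN (-((h y : ℝ) : EReal)) = ENNReal.ofReal (-h y) := fun y => by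
    rw [← EReal.coe_neg]; simp [eToENN, EReal.coe_ne_top]
  have hA : ∫⁻ y, ENNReal.ofReal (h y) ∂μ ≠ ⊤ := by
    refine ne_of_lt (lt_of_le_of_lt (lintegral_mono fun y => Real.ofReal_le_enorm _) ?_)
    exact hint.2
  have hB : ∫⁻ y, ENNReal.ofReal (-h y) ∂μ ≠ ⊤ := by
    refine ne_of_lt (lt_of_le_of_lt (lintegral_mono fun y => ?_) hint.2)
    rw [← enorm_neg]
    exact Real.ofReal_le_enorm _
  simp only [eintE, h1, h2]
  rw [integral_eq_lintegral_pos_part_sub_lintegral_neg_part hint,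
    coe_ennreal_eq_coe_toReal hA, coe_ennreal_eq_coe_toReal hB, ← EReal.coe_sub]

lemma bind_rr (ε p : ℝ) (hε : 0 < ε) (h0 : 0 ≤ p) (h1 : p ≤ 1) :
    (bern p).bind (rr ε) = bern ((p * Real.exp ε + (1 - p)) / (1 + Real.exp ε)) := by
  have hE : 0 < Real.exp ε := Real.exp_pos ε
  have h1E : 0 < 1 + Real.exp ε := by linarith
  have hd1 : (0:ℝ) ≤ 1 - 1 / (1 + Real.exp ε) := by
    rw [sub_nonneg, div_le_one h1E]; linarith
  have hd2 : (0:ℝ) ≤ 1 - Real.exp ε / (1 + Real.exp ε) := by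
    rw [sub_nonneg, div_le_one h1E]; linarith
  have hd3 : (0:ℝ) ≤ 1 / (1 + Real.exp ε) := by positivity
  have hd4 : (0:ℝ) ≤ Real.exp ε / (1 + Real.exp ε) := by positivity
  apply bool_measure_ext
  · rw [bern_bind_apply _ _ (measurableSet_singleton _), bern_false]
    simp only [rr, if_true, if_false, Bool.false_eq_true]
    rw [bern_false, bern_false, ← ENNReal.ofReal_mul (by linarith), ← ENNReal.ofReal_mul h0,
      ← ENNReal.ofReal_add (by nlinarith) (by nlinarith)]
    congr 1
    field_simp
    ring
  · rw [bern_bind_apply _ _ (measurableSet_singleton _), bern_true]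
    simp only [rr, if_true, if_false, Bool.false_eq_true]
    rw [bern_true, bern_true, ← ENNReal.ofReal_mul (by linarith), ← ENNReal.ofReal_mul h0,
      ← ENNReal.ofReal_add (by nlinarith) (by nlinarith)]
    congr 1
    field_simp
    ring

lemma bern_rnDeriv {p : ℝ} (g : Bool → ℝ) (hg0 : 0 ≤ g false) (hg1 : 0 ≤ g true)
    (hp0 : 0 ≤ p) (hp1 : p ≤ 1)
    (hfalse : (1 - p : ℝ) = g false * (1/2)) (htrue : (p : ℝ) = g true * (1/2)) :
    ∀ y, (bern p).rnDeriv (bern (1/2)) y = ENNReal.ofReal (g y) := by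
  haveI : IsProbabilityMeasure (bern (1/2 : ℝ)) := bern_prob (by norm_num) (by norm_num)
  have hwd : (bern (1/2 : ℝ)).withDensity (fun y => ENNReal.ofReal (g y)) = bern p := by
    apply bool_measure_ext
    · rw [withDensity_apply _ (measurableSet_singleton _), lintegral_singleton, bern_false,
        bern_false, ← ENNReal.ofReal_mul hg0]
      congr 1
      rw [hfalse]; norm_num
    · rw [withDensity_apply _ (measurableSet_singleton _), lintegral_singleton, bern_true,
        bern_true, ← ENNReal.ofReal_mul hg1]
      congr 1
      linarith [htrue]
  have hae := Measure.rnDeriv_withDensity (bern (1/2 : ℝ))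
    (f := fun y => ENNReal.ofReal (g y)) Measurable.of_discrete
  rw [hwd] at hae
  intro y
  by_contra hne
  have hsub : ({y} : Set Bool) ⊆ {x | ¬ (bern p).rnDeriv (bern (1/2)) x = ENNReal.ofReal (g x)} :=
    fun z hz => by rw [Set.mem_singleton_iff] at hz; subst hz; exact hne
  have h0 : bern (1/2 : ℝ) {y} = 0 :=
    measure_mono_null hsub (ae_iff.mp hae)
  cases y
  · rw [bern_false] at h0; norm_num at h0
  · rw [bern_true] at h0; norm_num at h0

lemma chord_bound {a b bet alp : ℝ} (ha : 0 < a) (hab : a < b)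
    (hβ : bet * (b - a) = b * Real.log b - a * Real.log a)
    (hα : alp = a * Real.log a - bet * a) :
    ∀ x ∈ Set.Icc a b, x * Real.log x ≤ alp + bet * x := by
  intro x hx
  have hba : 0 < b - a := by linarith
  set t := (b - x) / (b - a) with htdef
  set s := (x - a) / (b - a) with hsdef
  have ht : 0 ≤ t := div_nonneg (by linarith [hx.2]) hba.le
  have hs : 0 ≤ s := div_nonneg (by linarith [hx.1]) hba.le
  have hts : t + s = 1 := by rw [htdef, hsdef]; field_simp; ring
  have hx' : t * a + s * b = x := by rw [htdef, hsdef]; field_simp; ring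
  have hconv := Real.convexOn_mul_log.2 (Set.mem_Ici.2 ha.le)
    (Set.mem_Ici.2 (by linarith : (0:ℝ) ≤ b)) ht hs hts
  rw [smul_eq_mul, smul_eq_mul, smul_eq_mul, smul_eq_mul, hx'] at hconv
  calc x * Real.log x ≤ t * (a * Real.log a) + s * (b * Real.log b) := hconv
    _ = alp + bet * x := by
        rw [← hx', hα]
        linear_combination (a * Real.log a - bet * a) * hts - s * hβ


set_option maxHeartbeats 2000000 in
/-- The privacy-adjusted Kelly bet `e(y) = 1 + f*·(2y − 1)` with
`f* = (2q−1)(e^ε−1)/(e^ε+1)` is the likelihood ratio of the randomized-response output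
marginals, and it is the log-optimal `ε`-LDP e-variable for testing `Ber(1/2)` vs `Ber(q)`. -/
theorem ldp_kelly_bet (ε q : ℝ) (hε : 0 < ε) (hq : q ∈ Set.Ioo (1 / 2 : ℝ) 1)
    (fstar : ℝ) (hf : fstar = (2 * q - 1) * (Real.exp ε - 1) / (Real.exp ε + 1)) :
    (∀ y : Bool,
        ((bern q).bind (rr ε)).rnDeriv ((bern (1 / 2)).bind (rr ε)) y =
          ENNReal.ofReal (1 + fstar * (2 * (if y then (1 : ℝ) else 0) - 1))) ∧
      (∀ (Y : Type) (_ : MeasurableSpace Y) (κ : Bool → Measure Y),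
        (∀ x, IsProbabilityMeasure (κ x)) → IsLDP ε κ →
          ∀ F : Y → ℝ, Measurable F → (∀ y, 0 ≤ F y) →
            (∫⁻ y, ENNReal.ofReal (F y) ∂((bern (1 / 2)).bind κ)) ≤ 1 →
              eintE ((bern q).bind κ) (fun y => elog (F y)) ≤
                eintE ((bern q).bind (rr ε))
                  (fun y => elog (1 + fstar * (2 * (if y then (1 : ℝ) else 0) - 1)))) := by
  obtain ⟨hq1, hq2⟩ := hq
  have hE1 : 1 < Real.exp ε := by nlinarith [Real.add_one_le_exp ε]
  have hE0 : 0 < Real.exp ε := Real.exp_pos ε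
  have h1E : 0 < 1 + Real.exp ε := by linarith
  have hfs0 : 0 < fstar := by
    rw [hf]; exact div_pos (mul_pos (by linarith) (by linarith)) (by linarith)
  have hfs1 : fstar < 1 := by
    rw [hf, div_lt_one (by linarith)]; nlinarith
  have hq0 : 0 < q := by linarith
  -- marginal success probability
  have hbb : ((q * Real.exp ε + (1 - q)) / (1 + Real.exp ε)) * 2 = 1 + fstar := by
    rw [hf]; field_simp; ring
  have haa : (1 - (q * Real.exp ε + (1 - q)) / (1 + Real.exp ε)) * 2 = 1 - fstar := by
    rw [hf]; field_simp; ring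
  have hb'0 : 0 ≤ (q * Real.exp ε + (1 - q)) / (1 + Real.exp ε) :=
    div_nonneg (by nlinarith) (by linarith)
  have hb'1 : (q * Real.exp ε + (1 - q)) / (1 + Real.exp ε) ≤ 1 := by
    rw [div_le_one (by linarith)]; nlinarith
  have hmarg : (bern q).bind (rr ε) = bern ((q * Real.exp ε + (1 - q)) / (1 + Real.exp ε)) :=
    bind_rr ε q hε (by linarith) (by linarith)
  have hmarg0 : (bern (1/2 : ℝ)).bind (rr ε) = bern (1/2 : ℝ) := by
    rw [bind_rr ε (1/2) hε (by norm_num) (by norm_num)]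
    congr 1
    field_simp
    ring
  constructor
  · -- Part (i)
    rw [hmarg, hmarg0]
    refine bern_rnDeriv _ ?_ ?_ hb'0 hb'1 ?_ ?_
    · norm_num; linarith
    · norm_num; linarith
    · norm_num; linarith [haa]
    · norm_num; linarith [hbb]
  · -- Part (ii)
    intro Y mY κ hκ hLDP F hFmeas hFpos hFint
    set μ0 : Measure Y := (bern (1/2 : ℝ)).bind κ with hμ0
    set μq : Measure Y := (bern q).bind κ with hμq
    haveI hP0 : IsProbabilityMeasure μ0 := bern_bind_prob (by norm_num) (by norm_num) κ hκ
    haveI hPq : IsProbabilityMeasure μq := bern_bind_prob (by linarith) (by linarith) κ hκ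
    -- absolute continuity
    have hac : μq ≪ μ0 := by
      refine Measure.AbsolutelyContinuous.mk fun S hS h0 => ?_
      rw [hμ0, bern_bind_apply _ _ hS] at h0
      rw [add_eq_zero, mul_eq_zero, mul_eq_zero] at h0
      have hx : κ false S = 0 := by
        rcases h0.1 with h | h
        · exact absurd h (by rw [ENNReal.ofReal_eq_zero]; norm_num)
        · exact h
      have hy : κ true S = 0 := by
        rcases h0.2 with h | h
        · exact absurd h (by rw [ENNReal.ofReal_eq_zero]; norm_num)
        · exact h
      rw [hμq, bern_bind_apply _ _ hS, hx, hy, mul_zero, mul_zero, add_zero]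
    -- pointwise measure bounds from LDP
    have hlow : ∀ S : Set Y, MeasurableSet S →
        ENNReal.ofReal (1 - fstar) * μ0 S ≤ μq S := by
      intro S hS
      rw [hμ0, hμq, bern_bind_apply _ _ hS, bern_bind_apply _ _ hS]
      have e2 : (1:ℝ) - 1/2 = 1/2 := by norm_num
      rw [e2]
      have hL : ENNReal.ofReal (1 - fstar) *
          (ENNReal.ofReal (1/2) * κ false S + ENNReal.ofReal (1/2) * κ true S)
          = ENNReal.ofReal ((1-fstar)/2) * κ false S
            + ENNReal.ofReal ((1-fstar)/2) * κ true S := by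
        rw [mul_add, ← mul_assoc, ← mul_assoc, ← ENNReal.ofReal_mul (by linarith),
          show (1-fstar)*(1/2) = (1-fstar)/2 from by ring]
      rw [hL]
      have id1 : (1 - fstar)/2 = (1 - q) + (2*q-1)/(1+Real.exp ε) := by
        rw [hf]; field_simp; ring
      have id2 : q = (1 - fstar)/2 + Real.exp ε * ((2*q-1)/(1+Real.exp ε)) := by
        rw [hf]; field_simp; ring
      have hc0 : (0:ℝ) ≤ (2*q-1)/(1+Real.exp ε) := div_nonneg (by linarith) (by linarith)
      have hsplit1 : ENNReal.ofReal ((1-fstar)/2)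
          = ENNReal.ofReal (1-q) + ENNReal.ofReal ((2*q-1)/(1+Real.exp ε)) := by
        rw [id1, ENNReal.ofReal_add (by linarith) hc0]
      have hsplit2 : ENNReal.ofReal q
          = ENNReal.ofReal ((1-fstar)/2)
            + ENNReal.ofReal (Real.exp ε * ((2*q-1)/(1+Real.exp ε))) := by
        conv_lhs => rw [id2]
        rw [ENNReal.ofReal_add (by linarith) (mul_nonneg hE0.le hc0)]
      have key : ENNReal.ofReal ((2*q-1)/(1+Real.exp ε)) * κ false S
          ≤ ENNReal.ofReal (Real.exp ε * ((2*q-1)/(1+Real.exp ε))) * κ true S := by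
        rw [mul_comm (Real.exp ε), ENNReal.ofReal_mul hc0, mul_assoc]
        exact mul_le_mul_right (hLDP false true S hS) _
      calc ENNReal.ofReal ((1-fstar)/2) * κ false S + ENNReal.ofReal ((1-fstar)/2) * κ true S
          = ENNReal.ofReal (1-q) * κ false S + ENNReal.ofReal ((1-fstar)/2) * κ true S
            + ENNReal.ofReal ((2*q-1)/(1+Real.exp ε)) * κ false S := by
            rw [hsplit1]; ring
        _ ≤ ENNReal.ofReal (1-q) * κ false S + ENNReal.ofReal ((1-fstar)/2) * κ true S
            + ENNReal.ofReal (Real.exp ε * ((2*q-1)/(1+Real.exp ε))) * κ true S :=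
            add_le_add le_rfl key
        _ = ENNReal.ofReal (1-q) * κ false S + ENNReal.ofReal q * κ true S := by
            rw [hsplit2]; ring
    have hhigh : ∀ S : Set Y, MeasurableSet S →
        μq S ≤ ENNReal.ofReal (1 + fstar) * μ0 S := by
      intro S hS
      rw [hμ0, hμq, bern_bind_apply _ _ hS, bern_bind_apply _ _ hS]
      have e2 : (1:ℝ) - 1/2 = 1/2 := by norm_num
      rw [e2]
      have hL : ENNReal.ofReal (1 + fstar) *
          (ENNReal.ofReal (1/2) * κ false S + ENNReal.ofReal (1/2) * κ true S)
          = ENNReal.ofReal ((1+fstar)/2) * κ false S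
            + ENNReal.ofReal ((1+fstar)/2) * κ true S := by
        rw [mul_add, ← mul_assoc, ← mul_assoc, ← ENNReal.ofReal_mul (by linarith),
          show (1+fstar)*(1/2) = (1+fstar)/2 from by ring]
      rw [hL]
      have id3 : (1 + fstar)/2 = (1 - q) + Real.exp ε * ((2*q-1)/(1+Real.exp ε)) := by
        rw [hf]; field_simp; ring
      have id4 : q = (1 + fstar)/2 + (2*q-1)/(1+Real.exp ε) := by
        rw [hf]; field_simp; ring
      have hc0 : (0:ℝ) ≤ (2*q-1)/(1+Real.exp ε) := div_nonneg (by linarith) (by linarith)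
      have hsplit3 : ENNReal.ofReal ((1+fstar)/2)
          = ENNReal.ofReal (1-q)
            + ENNReal.ofReal (Real.exp ε * ((2*q-1)/(1+Real.exp ε))) := by
        rw [id3, ENNReal.ofReal_add (by linarith) (by positivity)]
      have hsplit4 : ENNReal.ofReal q
          = ENNReal.ofReal ((1+fstar)/2) + ENNReal.ofReal ((2*q-1)/(1+Real.exp ε)) := by
        conv_lhs => rw [id4]
        rw [ENNReal.ofReal_add (by linarith) hc0]
      have key : ENNReal.ofReal ((2*q-1)/(1+Real.exp ε)) * κ true S
          ≤ ENNReal.ofReal (Real.exp ε * ((2*q-1)/(1+Real.exp ε))) * κ false S := by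
        rw [mul_comm (Real.exp ε), ENNReal.ofReal_mul hc0, mul_assoc]
        exact mul_le_mul_right (hLDP true false S hS) _
      calc ENNReal.ofReal (1-q) * κ false S + ENNReal.ofReal q * κ true S
          = ENNReal.ofReal (1-q) * κ false S + ENNReal.ofReal ((1+fstar)/2) * κ true S
            + ENNReal.ofReal ((2*q-1)/(1+Real.exp ε)) * κ true S := by
            rw [hsplit4]; ring
        _ ≤ ENNReal.ofReal (1-q) * κ false S + ENNReal.ofReal ((1+fstar)/2) * κ true S
            + ENNReal.ofReal (Real.exp ε * ((2*q-1)/(1+Real.exp ε))) * κ false S :=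
            add_le_add le_rfl key
        _ = ENNReal.ofReal ((1+fstar)/2) * κ false S + ENNReal.ofReal ((1+fstar)/2) * κ true S := by
            rw [hsplit3]; ring
    -- a.e. bounds on the Radon-Nikodym derivative
    have hD_low : ∀ᵐ y ∂μ0, ENNReal.ofReal (1 - fstar) ≤ μq.rnDeriv μ0 y := by
      refine ae_le_of_forall_setLIntegral_le_of_sigmaFinite measurable_const
        (fun S hS _ => ?_)
      rw [setLIntegral_const, Measure.setLIntegral_rnDeriv hac]
      exact hlow S hS
    have hD_high : ∀ᵐ y ∂μ0, μq.rnDeriv μ0 y ≤ ENNReal.ofReal (1 + fstar) := by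
      refine ae_le_of_forall_setLIntegral_le_of_sigmaFinite (μq.measurable_rnDeriv μ0)
        (fun S hS _ => ?_)
      rw [setLIntegral_const, Measure.setLIntegral_rnDeriv hac]
      exact hhigh S hS
    have hD_fin := Measure.rnDeriv_lt_top μq μ0
    set l : Y → ℝ := fun y => (μq.rnDeriv μ0 y).toReal with hldef
    have hl_meas : Measurable l := (μq.measurable_rnDeriv μ0).ennreal_toReal
    have hl0 : ∀ᵐ y ∂μ0, (1 - fstar) ≤ l y ∧ l y ≤ (1 + fstar)
        ∧ μq.rnDeriv μ0 y = ENNReal.ofReal (l y) := by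
      filter_upwards [hD_low, hD_high, hD_fin] with y h1 h2 h3
      refine ⟨?_, ?_, (ENNReal.ofReal_toReal h3.ne).symm⟩
      · have h4 := ENNReal.toReal_mono h3.ne h1
        rwa [ENNReal.toReal_ofReal (by linarith)] at h4
      · have h4 := ENNReal.toReal_mono ENNReal.ofReal_ne_top h2
        rwa [ENNReal.toReal_ofReal (by linarith)] at h4
    have hlq : ∀ᵐ y ∂μq, (1 - fstar) ≤ l y ∧ l y ≤ (1 + fstar) :=
      hac.ae_le (hl0.mono fun y hy => ⟨hy.1, hy.2.1⟩)
    -- change of variables for lintegrals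
    have hwd : μ0.withDensity (μq.rnDeriv μ0) = μq := Measure.withDensity_rnDeriv_eq μq μ0 hac
    have hlint : ∀ (G : Y → ℝ≥0∞), Measurable G →
        ∫⁻ y, G y ∂μq = ∫⁻ y, μq.rnDeriv μ0 y * G y ∂μ0 := by
      intro G hG
      have h := lintegral_withDensity_eq_lintegral_mul μ0 (μq.measurable_rnDeriv μ0) hG
      rw [hwd] at h
      simpa using h
    have hlinv_nonneg : ∀ y, 0 ≤ (l y)⁻¹ := fun y => inv_nonneg.2 ENNReal.toReal_nonneg
    have hI1' : ∫⁻ y, ENNReal.ofReal ((l y)⁻¹) ∂μq = 1 := by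
      rw [hlint (fun y => ENNReal.ofReal ((l y)⁻¹)) hl_meas.inv.ennreal_ofReal]
      have h : ∀ᵐ y ∂μ0, μq.rnDeriv μ0 y * ENNReal.ofReal ((l y)⁻¹) = 1 := by
        filter_upwards [hl0] with y hy
        obtain ⟨h1, h2, h3⟩ := hy
        rw [h3, ← ENNReal.ofReal_mul (by linarith), mul_inv_cancel₀
          (by linarith : l y ≠ 0), ENNReal.ofReal_one]
      rw [lintegral_congr_ae h, lintegral_one, measure_univ]
    have hI2' : ∫⁻ y, ENNReal.ofReal (F y * (l y)⁻¹) ∂μq = ∫⁻ y, ENNReal.ofReal (F y) ∂μ0 := by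
      rw [hlint (fun y => ENNReal.ofReal (F y * (l y)⁻¹)) (hFmeas.mul hl_meas.inv).ennreal_ofReal]
      refine lintegral_congr_ae ?_
      filter_upwards [hl0] with y hy
      obtain ⟨h1, h2, h3⟩ := hy
      have hne : l y ≠ 0 := by linarith
      rw [h3, ← ENNReal.ofReal_mul (by linarith)]
      congr 1
      rw [mul_comm (F y), ← mul_assoc, mul_inv_cancel₀ hne, one_mul]
    have hI2le : ∫⁻ y, ENNReal.ofReal (F y * (l y)⁻¹) ∂μq ≤ 1 := by
      rw [hI2']; exact hFint
    -- integrability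
    have hint1 : Integrable (fun y => (l y)⁻¹) μq := by
      refine ⟨hl_meas.inv.aestronglyMeasurable,
        HasFiniteIntegral.of_bounded (C := (1 - fstar)⁻¹) ?_⟩
      filter_upwards [hlq] with y hy
      rw [Real.norm_eq_abs, abs_of_nonneg (hlinv_nonneg y)]
      exact inv_anti₀ (by linarith) hy.1
    have hint2 : Integrable (fun y => F y * (l y)⁻¹) μq := by
      refine ⟨(hFmeas.mul hl_meas.inv).aestronglyMeasurable, ?_⟩
      rw [hasFiniteIntegral_iff_ofReal
        (Filter.Eventually.of_forall fun y => mul_nonneg (hFpos y) (hlinv_nonneg y))]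
      exact lt_of_le_of_lt hI2le ENNReal.one_lt_top
    have hIone : ∫ y, (l y)⁻¹ ∂μq = 1 := by
      rw [integral_eq_lintegral_of_nonneg_ae (Filter.Eventually.of_forall hlinv_nonneg)
        hl_meas.inv.aestronglyMeasurable, hI1']
      simp
    have hItwo : ∫ y, F y * (l y)⁻¹ ∂μq ≤ 1 := by
      rw [integral_eq_lintegral_of_nonneg_ae
        (Filter.Eventually.of_forall fun y => mul_nonneg (hFpos y) (hlinv_nonneg y))
        (hFmeas.mul hl_meas.inv).aestronglyMeasurable]
      calc (∫⁻ y, ENNReal.ofReal (F y * (l y)⁻¹) ∂μq).toReal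
          ≤ (1 : ℝ≥0∞).toReal := ENNReal.toReal_mono ENNReal.one_ne_top hI2le
        _ = 1 := by simp
    have hItwo_nonneg : 0 ≤ ∫ y, F y * (l y)⁻¹ ∂μq :=
      integral_nonneg fun y => mul_nonneg (hFpos y) (hlinv_nonneg y)
    -- chord constants
    set bet : ℝ := ((1+fstar) * Real.log (1+fstar) - (1-fstar) * Real.log (1-fstar)) / (2*fstar)
      with hbet
    set alp : ℝ := (1-fstar) * Real.log (1-fstar) - bet * (1-fstar) with halp
    have hbet2 : bet * (2*fstar) = (1+fstar) * Real.log (1+fstar)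
        - (1-fstar) * Real.log (1-fstar) := by
      rw [hbet]; field_simp
    have hchord := chord_bound (by linarith : (0:ℝ) < 1 - fstar)
      (by linarith : (1:ℝ) - fstar < 1 + fstar)
      (by linear_combination hbet2) halp
    -- pointwise bound
    have hpt : ∀ᵐ y ∂μq, elog (F y)
        ≤ (((bet - 1) + (alp * (l y)⁻¹ + F y * (l y)⁻¹) : ℝ) : EReal) := by
      filter_upwards [hlq] with y hy
      obtain ⟨h1, h2⟩ := hy
      by_cases hF0 : F y ≤ 0
      · rw [elog, if_pos hF0]; exact bot_le
      push_neg at hF0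
      rw [elog, if_neg (not_le.2 hF0)]
      refine EReal.coe_le_coe_iff.2 ?_
      have hl_pos : 0 < l y := by linarith
      have hlne : l y ≠ 0 := hl_pos.ne'
      have hkey : Real.log (l y) ≤ bet + alp * (l y)⁻¹ := by
        have hch := hchord (l y) ⟨h1, h2⟩
        have hnn : 0 ≤ (alp + bet * l y - l y * Real.log (l y)) * (l y)⁻¹ :=
          mul_nonneg (by linarith) (inv_nonneg.2 hl_pos.le)
        have hexp : (alp + bet * l y - l y * Real.log (l y)) * (l y)⁻¹
            = alp * (l y)⁻¹ + bet - Real.log (l y) := by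
          field_simp
        rw [hexp] at hnn
        linarith
      have hsplit : Real.log (F y) = Real.log (F y * (l y)⁻¹) + Real.log (l y) := by
        rw [← Real.log_mul (by positivity) hlne]
        congr 1
        rw [mul_assoc, inv_mul_cancel₀ hlne, mul_one]
      have hloglin : Real.log (F y * (l y)⁻¹) ≤ F y * (l y)⁻¹ - 1 :=
        Real.log_le_sub_one_of_pos (by positivity)
      rw [hsplit]
      linarith
    -- integral of the dominating function
    have hint12 : Integrable (fun y => alp * (l y)⁻¹ + F y * (l y)⁻¹) μq :=
      (hint1.const_mul alp).add hint2
    have hintG : Integrable (fun y => (bet - 1) + (alp * (l y)⁻¹ + F y * (l y)⁻¹)) μq :=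
      (integrable_const _).add hint12
    have hIG : ∫ y, ((bet - 1) + (alp * (l y)⁻¹ + F y * (l y)⁻¹)) ∂μq ≤ alp + bet := by
      rw [integral_add (integrable_const _) hint12, integral_add (hint1.const_mul alp) hint2,
        integral_const, integral_const_mul, hIone, probReal_univ]
      simp only [ENNReal.toReal_one, smul_eq_mul, one_mul, mul_one]
      linarith
    -- value of the RHS
    have hRHS : eintE ((bern q).bind (rr ε))
        (fun y => elog (1 + fstar * (2 * (if y then (1 : ℝ) else 0) - 1)))
        = ((alp + bet : ℝ) : EReal) := by
      rw [hmarg]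
      rw [eintE, lintegral_bern, lintegral_bern]
      have efalse : (1 + fstar * (2 * (if (false : Bool) then (1:ℝ) else 0) - 1)) = 1 - fstar := by
        norm_num
        ring
      have etrue : (1 + fstar * (2 * (if (true : Bool) then (1:ℝ) else 0) - 1)) = 1 + fstar := by
        norm_num
      rw [efalse, etrue]
      have hlogb : (0:ℝ) ≤ Real.log (1 + fstar) := Real.log_nonneg (by linarith)
      have hloga : Real.log (1 - fstar) ≤ 0 := Real.log_nonpos (by linarith) (by linarith)
      have ea : elog (1 - fstar) = ((Real.log (1 - fstar) : ℝ) : EReal) := by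
        rw [elog, if_neg (by linarith : ¬ (1 - fstar ≤ 0))]
      have eb : elog (1 + fstar) = ((Real.log (1 + fstar) : ℝ) : EReal) := by
        rw [elog, if_neg (by linarith : ¬ (1 + fstar ≤ 0))]
      rw [ea, eb]
      have v1 : eToENN ((Real.log (1 - fstar) : ℝ) : EReal) = 0 := by
        simp [eToENN, EReal.coe_ne_top, ENNReal.ofReal_eq_zero.2 hloga]
      have v2 : eToENN ((Real.log (1 + fstar) : ℝ) : EReal)
          = ENNReal.ofReal (Real.log (1 + fstar)) := by
        simp [eToENN, EReal.coe_ne_top]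
      have v3 : eToENN (-((Real.log (1 - fstar) : ℝ) : EReal))
          = ENNReal.ofReal (-Real.log (1 - fstar)) := by
        rw [← EReal.coe_neg]; simp [eToENN, EReal.coe_ne_top]
      have v4 : eToENN (-((Real.log (1 + fstar) : ℝ) : EReal)) = 0 := by
        rw [← EReal.coe_neg]
        simp [eToENN, EReal.coe_ne_top, ENNReal.ofReal_eq_zero.2 (by linarith : -Real.log (1+fstar) ≤ 0)]
      rw [v1, v2, v3, v4, mul_zero, zero_add, mul_zero, add_zero]
      rw [← ENNReal.ofReal_mul hb'0, ← ENNReal.ofReal_mul (by linarith)]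
      rw [coe_ennreal_eq_coe_toReal ENNReal.ofReal_ne_top,
        coe_ennreal_eq_coe_toReal ENNReal.ofReal_ne_top,
        ENNReal.toReal_ofReal (mul_nonneg hb'0 hlogb),
        ENNReal.toReal_ofReal (mul_nonneg (by linarith) (by linarith)),
        ← EReal.coe_sub]
      rw [EReal.coe_eq_coe_iff]
      rw [halp]
      linear_combination (Real.log (1+fstar)/2) * hbb + (Real.log (1-fstar)/2) * haa
        - (1/2) * hbet2
    -- put everything together
    calc eintE μq (fun y => elog (F y))
        ≤ eintE μq (fun y => (((bet - 1) + (alp * (l y)⁻¹ + F y * (l y)⁻¹) : ℝ) : EReal)) :=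
          eintE_mono_ae hpt
      _ = ((∫ y, ((bet - 1) + (alp * (l y)⁻¹ + F y * (l y)⁻¹)) ∂μq : ℝ) : EReal) :=
          eintE_coe_eq_integral hintG
      _ ≤ ((alp + bet : ℝ) : EReal) := EReal.coe_le_coe_iff.2 hIG
      _ = eintE ((bern q).bind (rr ε))
          (fun y => elog (1 + fstar * (2 * (if y then (1 : ℝ) else 0) - 1))) := hRHS.symm
end
end

section
/- Let 𝒫₀ and 𝒫₁ be classes of probability measures on a measurable space X, let (P₀*, P₁*) ∈ 𝒫₀ × 𝒫₁ satisfy the stochastic-dominance property, and let 𝒞 be an arbitrary set of measurable functions X → [0,∞) (the structural constraint); for a set H of probability measures define ℰ′(H) = { E ∈ 𝒞 : ∫ E dP ≤ 1 for all P ∈ H }. Suppose E* ∈ ℰ′({P₀*}) maximizes E ↦ E_{P₁*}[log E] over ℰ′({P₀*}) and that E* = ψ(L*) for some nondecreasing measurable ψ : [0,∞) → [0,∞). Then E* ∈ ℰ′(𝒫₀), and sup over E ∈ ℰ′(𝒫₀) of inf over P₁ ∈ 𝒫₁ of E_{P₁}[log E] equals inf over P₁ ∈ 𝒫₁ of E_{P₁}[log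 E*], which equals E_{P₁*}[log E*] (expectations in the extended reals). -/
/-! The stochastic-dominance property, applied to the nondecreasing transforms `ofReal ∘ ψ` and
`elog ∘ ψ` of `L*`, says that `P₀*` maximizes `E_P[E*]` over `𝒫₀` and that `P₁*`
minimizes `E_P[log E*]` over `𝒫₁`. The first fact makes `E*` valid for the whole null, so it
competes in the composite problem. Conversely, a competitor `E` valid for `𝒫₀` is in particular
valid for `P₀*`, so its worst case over `𝒫₁` is at most `E_{P₁*}[log E] ≤ E_{P₁*}[log E*]`, which by
the second fact is the worst case of `E*`. -/

open MeasureTheory Real Set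
open scoped ENNReal

noncomputable section

attribute [local instance] Classical.propDecidable

lemma monotone_elog : Monotone elog := by
  intro x y hxy
  unfold elog
  split_ifs with hx hy hy
  · exact le_rfl
  · exact bot_le
  · exact absurd (hxy.trans hy) hx
  · exact EReal.coe_le_coe_iff.mpr (Real.log_le_log (lt_of_not_ge hx) hxy)

lemma measurable_elog : Measurable elog :=
  Measurable.ite measurableSet_Iic measurable_const
    (measurable_coe_real_ereal.comp Real.measurable_log)

lemma eToENN_coe_ennreal (a : ℝ≥0∞) : eToENN (a : EReal) = a := by
  by_cases ha : a = ⊤ <;> simp [eToENN, ha]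

lemma eToENN_neg_coe_ennreal (a : ℝ≥0∞) : eToENN (-(a : EReal)) = 0 := by
  have hne : -(a : EReal) ≠ ⊤ := by simp
  have hle : -(a : EReal) ≤ 0 := by simpa using EReal.coe_ennreal_nonneg a
  simp only [eToENN, hne, if_false, ENNReal.ofReal_eq_zero]
  exact EReal.toReal_nonpos hle

lemma eintE_coe_ennreal {Y : Type*} [MeasurableSpace Y] (μ : Measure Y) (g : Y → ℝ≥0∞) :
    eintE μ (fun y => (g y : EReal)) = ((∫⁻ y, g y ∂μ : ℝ≥0∞) : EReal) := by
  simp only [eintE, eToENN_coe_ennreal, eToENN_neg_coe_ennreal, lintegral_zero,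
    EReal.coe_ennreal_zero, sub_zero]

section Dominance

variable {X : Type*} [MeasurableSpace X]

def MonotoneDominated (L : X → ℝ) (μ ν : Measure X) : Prop :=
  ∀ f : ℝ → EReal, Measurable f → MonotoneOn f (Ici 0) →
    eintE μ (fun x => f (L x)) ≤ eintE ν (fun x => f (L x))

variable {L : X → ℝ} {μ ν : Measure X} {ψ : ℝ → ℝ}

lemma MonotoneDominated.lintegral_ofReal_comp_le (h : MonotoneDominated L μ ν)
    (hψmono : MonotoneOn ψ (Ici 0)) (hψmeas : Measurable ψ) :
    ∫⁻ x, ENNReal.ofReal (ψ (L x)) ∂μ ≤ ∫⁻ x, ENNReal.ofReal (ψ (L x)) ∂ν := by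
  -- An `ℝ≥0∞`-valued test function turns `eintE` into a lower integral, whatever the sign of `ψ`.
  have hdom := h (fun y => (ENNReal.ofReal (ψ y) : EReal))
    (measurable_coe_ennreal_ereal.comp (ENNReal.measurable_ofReal.comp hψmeas))
    (fun a ha b hb hab => EReal.coe_ennreal_le_coe_ennreal_iff.mpr
      (ENNReal.ofReal_le_ofReal (hψmono ha hb hab)))
  rwa [eintE_coe_ennreal, eintE_coe_ennreal, EReal.coe_ennreal_le_coe_ennreal_iff] at hdom

lemma MonotoneDominated.eintE_elog_comp_le (h : MonotoneDominated L μ ν)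
    (hψmono : MonotoneOn ψ (Ici 0)) (hψmeas : Measurable ψ) :
    eintE μ (fun x => elog (ψ (L x))) ≤ eintE ν (fun x => elog (ψ (L x))) :=
  h _ (measurable_elog.comp hψmeas) fun _ ha _ hb hab => monotone_elog (hψmono ha hb hab)

end Dominance

theorem composite_lifting_log_general
    {X : Type*} [MeasurableSpace X]
    (𝒫₀ 𝒫₁ : Set (Measure X))
    (Pstar₀ Pstar₁ : Measure X) (hmem₀ : Pstar₀ ∈ 𝒫₀) (hmem₁ : Pstar₁ ∈ 𝒫₁)
    (Lstar : X → ℝ)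
    -- stochastic-dominance property of the LFD pair
    (hSD₀ : ∀ f : ℝ → EReal, Measurable f → MonotoneOn f (Set.Ici 0) →
      ∀ P₀ ∈ 𝒫₀, eintE P₀ (fun x => f (Lstar x)) ≤ eintE Pstar₀ (fun x => f (Lstar x)))
    (hSD₁ : ∀ f : ℝ → EReal, Measurable f → MonotoneOn f (Set.Ici 0) →
      ∀ P₁ ∈ 𝒫₁, eintE Pstar₁ (fun x => f (Lstar x)) ≤ eintE P₁ (fun x => f (Lstar x)))
    -- the structural constraint class
    (𝒞 : Set (X → ℝ))
    -- the simple-vs-simple optimizer and its monotone representation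
    (Estar : X → ℝ) (hE𝒞 : Estar ∈ 𝒞)
    (hEvalid : (∫⁻ x, ENNReal.ofReal (Estar x) ∂Pstar₀) ≤ 1)
    (hEopt : ∀ E ∈ 𝒞, (∫⁻ x, ENNReal.ofReal (E x) ∂Pstar₀) ≤ 1 →
      eintE Pstar₁ (fun x => elog (E x)) ≤ eintE Pstar₁ (fun x => elog (Estar x)))
    (ψ : ℝ → ℝ) (hψmono : MonotoneOn ψ (Set.Ici 0)) (hψmeas : Measurable ψ)
    (hrep : ∀ x, Estar x = ψ (Lstar x)) :
    (∀ P₀ ∈ 𝒫₀, (∫⁻ x, ENNReal.ofReal (Estar x) ∂P₀) ≤ 1) ∧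
      (⨆ E ∈ {E : X → ℝ | E ∈ 𝒞 ∧ ∀ P₀ ∈ 𝒫₀, (∫⁻ x, ENNReal.ofReal (E x) ∂P₀) ≤ 1},
          ⨅ P₁ ∈ 𝒫₁, eintE P₁ (fun x => elog (E x))) =
        (⨅ P₁ ∈ 𝒫₁, eintE P₁ (fun x => elog (Estar x))) ∧
      (⨅ P₁ ∈ 𝒫₁, eintE P₁ (fun x => elog (Estar x))) =
        eintE Pstar₁ (fun x => elog (Estar x)) := by
  obtain rfl : Estar = fun x => ψ (Lstar x) := funext hrep
  have valid : ∀ P₀ ∈ 𝒫₀, (∫⁻ x, ENNReal.ofReal (ψ (Lstar x)) ∂P₀) ≤ 1 := fun P₀ hP₀ =>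
    (MonotoneDominated.lintegral_ofReal_comp_le (fun f hf hmono => hSD₀ f hf hmono P₀ hP₀)
      hψmono hψmeas).trans hEvalid
  have worst : (⨅ P₁ ∈ 𝒫₁, eintE P₁ (fun x => elog (ψ (Lstar x)))) =
      eintE Pstar₁ (fun x => elog (ψ (Lstar x))) :=
    le_antisymm (iInf₂_le _ hmem₁) <| le_iInf₂ fun P₁ hP₁ =>
      MonotoneDominated.eintE_elog_comp_le (fun f hf hmono => hSD₁ f hf hmono P₁ hP₁)
        hψmono hψmeas
  refine ⟨valid, le_antisymm ?_ (le_iSup₂_of_le _ ⟨hE𝒞, valid⟩ le_rfl), worst⟩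
  rw [worst]
  exact iSup₂_le fun E hE => (iInf₂_le _ hmem₁).trans (hEopt E hE.1 (hE.2 _ hmem₀))

/-- If the constrained simple-vs-simple optimizer `E*` for the LFD pair
`(P₀*, P₁*)` is a nondecreasing transform of the likelihood ratio, then it is a valid
constrained e-variable for the full composite null, and it is GROW for the composite
problem. -/
theorem composite_lifting_log
    {X : Type*} [MeasurableSpace X]
    (𝒫₀ 𝒫₁ : Set (Measure X))
    (h𝒫₀ : ∀ P ∈ 𝒫₀, IsProbabilityMeasure P) (h𝒫₁ : ∀ P ∈ 𝒫₁, IsProbabilityMeasure P)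
    (Pstar₀ Pstar₁ : Measure X) (hmem₀ : Pstar₀ ∈ 𝒫₀) (hmem₁ : Pstar₁ ∈ 𝒫₁)
    [IsProbabilityMeasure Pstar₀] [IsProbabilityMeasure Pstar₁]
    (hac : Pstar₁ ≪ Pstar₀)
    (Lstar : X → ℝ) (hL : Lstar = fun x => (Pstar₁.rnDeriv Pstar₀ x).toReal)
    -- stochastic-dominance property of the LFD pair
    (hSD₀ : ∀ f : ℝ → EReal, Measurable f → MonotoneOn f (Set.Ici 0) →
      ∀ P₀ ∈ 𝒫₀, eintE P₀ (fun x => f (Lstar x)) ≤ eintE Pstar₀ (fun x => f (Lstar x)))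
    (hSD₁ : ∀ f : ℝ → EReal, Measurable f → MonotoneOn f (Set.Ici 0) →
      ∀ P₁ ∈ 𝒫₁, eintE Pstar₁ (fun x => f (Lstar x)) ≤ eintE P₁ (fun x => f (Lstar x)))
    -- the structural constraint class
    (𝒞 : Set (X → ℝ)) (h𝒞 : ∀ E ∈ 𝒞, Measurable E ∧ ∀ x, 0 ≤ E x)
    -- the simple-vs-simple optimizer and its monotone representation
    (Estar : X → ℝ) (hE𝒞 : Estar ∈ 𝒞)
    (hEvalid : (∫⁻ x, ENNReal.ofReal (Estar x) ∂Pstar₀) ≤ 1)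
    (hEopt : ∀ E ∈ 𝒞, (∫⁻ x, ENNReal.ofReal (E x) ∂Pstar₀) ≤ 1 →
      eintE Pstar₁ (fun x => elog (E x)) ≤ eintE Pstar₁ (fun x => elog (Estar x)))
    (ψ : ℝ → ℝ) (hψmono : MonotoneOn ψ (Set.Ici 0)) (hψmeas : Measurable ψ)
    (hψnonneg : ∀ y : ℝ, 0 ≤ y → 0 ≤ ψ y)
    (hrep : ∀ x, Estar x = ψ (Lstar x)) :
    (∀ P₀ ∈ 𝒫₀, (∫⁻ x, ENNReal.ofReal (Estar x) ∂P₀) ≤ 1) ∧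
      (⨆ E ∈ {E : X → ℝ | E ∈ 𝒞 ∧ ∀ P₀ ∈ 𝒫₀, (∫⁻ x, ENNReal.ofReal (E x) ∂P₀) ≤ 1},
          ⨅ P₁ ∈ 𝒫₁, eintE P₁ (fun x => elog (E x))) =
        (⨅ P₁ ∈ 𝒫₁, eintE P₁ (fun x => elog (Estar x))) ∧
      (⨅ P₁ ∈ 𝒫₁, eintE P₁ (fun x => elog (Estar x))) =
        eintE Pstar₁ (fun x => elog (Estar x)) :=
  composite_lifting_log_general 𝒫₀ 𝒫₁ Pstar₀ Pstar₁ hmem₀ hmem₁ Lstar hSD₀ hSD₁ 𝒞 Estar hE𝒞 hEvalid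
    hEopt ψ hψmono hψmeas hrep
end
end
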